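/- arXiv:1507.05041 — 10 statements merged into one kernel-verified Lean document; each statement's English description precedes it below -/
import Mathlib

section
/- For every path connected subset A of the Manhattan plane ℝ₁², the horizontal and vertical hatching operators commute on A, i.e. L_x(L_y(A)) = L_y(L_x(A)). -/
/-!
A point `p` of `L_x(L_y(A))` lies on a row between two vertical segments `[a₀, a₁]` and
`[b₀, b₁]` with endpoints in `A`, the left one to the left of `p` and the right one to the right.
A path in `A` from `a₁` to `b₁` crosses the column of `p`: at its first and last crossing either
it is at or above `p`, or it has already crossed the row of `p` on the left and will cross it again
on the right. Either way `L_x(A)` contains a point of the column of `p` at or above `p`;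
symmetrically (path from `a₀` to `b₀`) one at or below `p`, so `p ∈ L_y(L_x(A))`.
The reverse inclusion is the same statement for the reflection of `A` in the diagonal.
-/

open Set OrderDual

/-- The taxicab (ℓ¹) distance on the plane, making `ℝ × ℝ` the Manhattan plane ℝ₁². -/
def taxiDist (p q : ℝ × ℝ) : ℝ := |p.1 - q.1| + |p.2 - q.2|

/-- Horizontal hatching `L_x(A)`. -/
def hatchX (A : Set (ℝ × ℝ)) : Set (ℝ × ℝ) :=
  {p | ∃ a ∈ A, ∃ b ∈ A, a.2 = p.2 ∧ b.2 = p.2 ∧ a.1 ≤ p.1 ∧ p.1 ≤ b.1}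

/-- Vertical hatching `L_y(A)`. -/
def hatchY (A : Set (ℝ × ℝ)) : Set (ℝ × ℝ) :=
  {p | ∃ a ∈ A, ∃ b ∈ A, a.1 = p.1 ∧ b.1 = p.1 ∧ a.2 ≤ p.2 ∧ p.2 ≤ b.2}

/-- Double hatching `L(A) = L_x(L_y(A))`. -/
def doubleHatch (A : Set (ℝ × ℝ)) : Set (ℝ × ℝ) := hatchX (hatchY A)

section Crossings

variable {α δ β : Type*} [ConditionallyCompleteLinearOrder α] [TopologicalSpace α]
  [OrderTopology α] [DenselyOrdered α] [LinearOrder δ] [TopologicalSpace δ]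
  [OrderClosedTopology δ] [LinearOrder β] [TopologicalSpace β] [OrderClosedTopology β]
  {a b : α} {f : α → δ} {g : α → β} {c x : δ} {y : β}

theorem exists_first_hit (hab : a ≤ b) (hf : ContinuousOn f (Icc a b)) (ha : f a ≤ c)
    (hb : c ≤ f b) : ∃ t ∈ Icc a b, f t = c ∧ ∀ s ∈ Icc a t, f s ≤ c := by
  set S := Icc a b ∩ f ⁻¹' Ici c
  have hbdd : BddBelow S := ⟨a, fun s hs => hs.1.1⟩
  have hS : sInf S ∈ S :=
    (hf.preimage_isClosed_of_isClosed isClosed_Icc isClosed_Ici).csInf_mem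
      ⟨b, right_mem_Icc.2 hab, hb⟩ hbdd
  obtain ⟨s, hs, hfs⟩ :=
    intermediate_value_Icc hS.1.1 (hf.mono (Icc_subset_Icc_right hS.1.2)) ⟨ha, hS.2⟩
  have hs_eq : s = sInf S :=
    hs.2.antisymm (csInf_le hbdd ⟨⟨hs.1, hs.2.trans hS.1.2⟩, hfs.ge⟩)
  refine ⟨sInf S, hS.1, hs_eq ▸ hfs, fun r hr => ?_⟩
  rcases hr.2.lt_or_eq with hlt | rfl
  · exact le_of_not_ge fun hcr => (csInf_le hbdd ⟨⟨hr.1, hr.2.trans hS.1.2⟩, hcr⟩).not_gt hlt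
  · exact (hs_eq ▸ hfs).le

theorem exists_last_hit (hab : a ≤ b) (hf : ContinuousOn f (Icc a b)) (ha : f a ≤ c)
    (hb : c ≤ f b) : ∃ t ∈ Icc a b, f t = c ∧ ∀ s ∈ Icc t b, c ≤ f s := by
  obtain ⟨t, ht, hft, hafter⟩ := exists_first_hit (α := αᵒᵈ) (δ := δᵒᵈ) (a := toDual b)
    (b := toDual a) (f := toDual ∘ f ∘ ofDual) hab (by rw [Icc_toDual]; exact hf) hb ha
  exact ⟨ofDual t, ⟨ht.2, ht.1⟩, hft, fun s hs => hafter (toDual s) ⟨hs.2, hs.1⟩⟩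

theorem exists_hit_ge_or_straddle (hab : a ≤ b) (hf : ContinuousOn f (Icc a b))
    (hg : ContinuousOn g (Icc a b)) (hfa : f a ≤ x) (hfb : x ≤ f b) (hga : y ≤ g a)
    (hgb : y ≤ g b) :
    (∃ t ∈ Icc a b, f t = x ∧ y ≤ g t) ∨
      ∃ s ∈ Icc a b, ∃ s' ∈ Icc a b, g s = y ∧ g s' = y ∧ f s ≤ x ∧ x ≤ f s' := by
  obtain ⟨t, ht, hft, hbefore⟩ := exists_first_hit hab hf hfa hfb
  obtain ⟨t', ht', hft', hafter⟩ := exists_last_hit hab hf hfa hfb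
  rcases le_or_gt y (g t) with hgt | hgt
  · exact Or.inl ⟨t, ht, hft, hgt⟩
  rcases le_or_gt y (g t') with hgt' | hgt'
  · exact Or.inl ⟨t', ht', hft', hgt'⟩
  obtain ⟨s, hs, hgs⟩ := intermediate_value_Icc' ht.1
    (hg.mono (Icc_subset_Icc_right ht.2)) ⟨hgt.le, hga⟩
  obtain ⟨s', hs', hgs'⟩ := intermediate_value_Icc ht'.2
    (hg.mono (Icc_subset_Icc_left ht'.1)) ⟨hgt'.le, hgb⟩
  exact Or.inr ⟨s, ⟨hs.1, hs.2.trans ht.2⟩, s', ⟨ht'.1.trans hs'.1, hs'.2⟩, hgs, hgs',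
    hbefore s hs, hafter s' hs'⟩

end Crossings

theorem subset_hatchX (A : Set (ℝ × ℝ)) : A ⊆ hatchX A :=
  fun p hp => ⟨p, hp, p, hp, rfl, rfl, le_rfl, le_rfl⟩

theorem exists_mem_hatchX_ge_of_joinedIn {A : Set (ℝ × ℝ)} {u v : ℝ × ℝ} (h : JoinedIn A u v)
    {x y : ℝ} (hux : u.1 ≤ x) (hvx : x ≤ v.1) (huy : y ≤ u.2) (hvy : y ≤ v.2) :
    ∃ q ∈ hatchX A, q.1 = x ∧ y ≤ q.2 := by
  set γ := h.somePath
  rcases exists_hit_ge_or_straddle (α := unitInterval) zero_le_one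
      (continuous_fst.comp γ.continuous).continuousOn
      (continuous_snd.comp γ.continuous).continuousOn
      (by simpa using hux) (by simpa using hvx) (by simpa using huy) (by simpa using hvy) with
    ⟨t, -, htx, hty⟩ | ⟨s, -, s', -, hsy, hs'y, hsx, hs'x⟩
  · exact ⟨γ t, subset_hatchX A (h.somePath_mem t), htx, hty⟩
  · exact ⟨(x, y), ⟨γ s, h.somePath_mem s, γ s', h.somePath_mem s', hsy, hs'y, hsx, hs'x⟩,
      rfl, le_rfl⟩

theorem exists_mem_hatchX_le_of_joinedIn {A : Set (ℝ × ℝ)} {u v : ℝ × ℝ} (h : JoinedIn A u v)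
    {x y : ℝ} (hux : u.1 ≤ x) (hvx : x ≤ v.1) (huy : u.2 ≤ y) (hvy : v.2 ≤ y) :
    ∃ q ∈ hatchX A, q.1 = x ∧ q.2 ≤ y := by
  set γ := h.somePath
  rcases exists_hit_ge_or_straddle (α := unitInterval) (β := ℝᵒᵈ) (y := toDual y) zero_le_one
      (continuous_fst.comp γ.continuous).continuousOn
      (continuous_toDual.comp (continuous_snd.comp γ.continuous)).continuousOn
      (by simpa using hux) (by simpa using hvx) (by simpa using huy) (by simpa using hvy) with
    ⟨t, -, htx, hty⟩ | ⟨s, -, s', -, hsy, hs'y, hsx, hs'x⟩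
  · exact ⟨γ t, subset_hatchX A (h.somePath_mem t), htx, hty⟩
  · exact ⟨(x, y), ⟨γ s, h.somePath_mem s, γ s', h.somePath_mem s', hsy, hs'y, hsx, hs'x⟩,
      rfl, le_rfl⟩

theorem hatchX_hatchY_subset_of_isPathConnected {A : Set (ℝ × ℝ)} (hA : IsPathConnected A) :
    hatchX (hatchY A) ⊆ hatchY (hatchX A) := by
  rintro p ⟨a, ⟨a₀, ha₀, a₁, ha₁, ha₀x, ha₁x, ha₀y, ha₁y⟩, b, ⟨b₀, hb₀, b₁, hb₁, hb₀x, hb₁x,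
    hb₀y, hb₁y⟩, hay, hby, hax, hbx⟩
  obtain ⟨c, hc, hcx, hcy⟩ := exists_mem_hatchX_le_of_joinedIn (hA.joinedIn _ ha₀ _ hb₀)
    (ha₀x.trans_le hax) (hbx.trans_eq hb₀x.symm) (ha₀y.trans_eq hay) (hb₀y.trans_eq hby)
  obtain ⟨d, hd, hdx, hdy⟩ := exists_mem_hatchX_ge_of_joinedIn (hA.joinedIn _ ha₁ _ hb₁)
    (ha₁x.trans_le hax) (hbx.trans_eq hb₁x.symm) (hay.symm.trans_le ha₁y)
    (hby.symm.trans_le hb₁y)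
  exact ⟨c, hc, d, hd, hcx, hdx, hcy, hdy⟩

theorem hatchX_preimage_swap (A : Set (ℝ × ℝ)) :
    hatchX (Prod.swap ⁻¹' A) = Prod.swap ⁻¹' hatchY A := by
  ext p
  constructor
  · rintro ⟨a, ha, b, hb, h⟩
    exact ⟨a.swap, ha, b.swap, hb, h⟩
  · rintro ⟨a, ha, b, hb, h⟩
    exact ⟨a.swap, ha, b.swap, hb, h⟩

theorem hatchY_preimage_swap (A : Set (ℝ × ℝ)) :
    hatchY (Prod.swap ⁻¹' A) = Prod.swap ⁻¹' hatchX A := by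
  ext p
  constructor
  · rintro ⟨a, ha, b, hb, h⟩
    exact ⟨a.swap, ha, b.swap, hb, h⟩
  · rintro ⟨a, ha, b, hb, h⟩
    exact ⟨a.swap, ha, b.swap, hb, h⟩

/-- For every path connected subset `A` of the Manhattan plane, the horizontal and
vertical hatching operators commute on `A`: `L_x(L_y(A)) = L_y(L_x(A))`. -/
theorem hatch_comm_of_pathConnected (A : Set (ℝ × ℝ)) (hA : IsPathConnected A) :
    hatchX (hatchY A) = hatchY (hatchX A) := by
  refine (hatchX_hatchY_subset_of_isPathConnected hA).antisymm ?_
  have hswap : IsPathConnected (Prod.swap ⁻¹' A) := by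
    simpa only [image_swap_eq_preimage_swap] using hA.image continuous_swap
  have := hatchX_hatchY_subset_of_isPathConnected hswap
  rwa [hatchY_preimage_swap, hatchX_preimage_swap, hatchX_preimage_swap, hatchY_preimage_swap,
    Prod.swap_surjective.preimage_subset_preimage_iff] at this
end

section
/- For the three-point set A = {(0,0), (2,0), (1,1)} in the Manhattan plane ℝ₁², the hatching operators do not commute: L_x(L_y(A)) ≠ L_y(L_x(A)). -/
open Set

/-- For the three-point set `A = {(0,0), (2,0), (1,1)}` in the Manhattan plane, the
hatching operators do not commute: `L_x(L_y(A)) ≠ L_y(L_x(A))`. -/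
theorem hatch_not_comm_three_points :
    hatchX (hatchY ({((0 : ℝ), (0 : ℝ)), (2, 0), (1, 1)} : Set (ℝ × ℝ))) ≠
      hatchY (hatchX ({((0 : ℝ), (0 : ℝ)), (2, 0), (1, 1)} : Set (ℝ × ℝ))) := by
  intro h
  have hmem : ((1 : ℝ), (1/2 : ℝ)) ∈
      hatchY (hatchX ({((0 : ℝ), (0 : ℝ)), (2, 0), (1, 1)} : Set (ℝ × ℝ))) := by
    refine ⟨((1:ℝ),(0:ℝ)), ?_, ((1:ℝ),(1:ℝ)), ?_, rfl, rfl, by norm_num, by norm_num⟩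
    · exact ⟨((0:ℝ),(0:ℝ)), by simp, ((2:ℝ),(0:ℝ)), by simp, rfl, rfl, by norm_num, by norm_num⟩
    · exact ⟨((1:ℝ),(1:ℝ)), by simp, ((1:ℝ),(1:ℝ)), by simp, rfl, rfl, le_refl _, le_refl _⟩
  rw [← h] at hmem
  obtain ⟨a, ⟨c, hc, d, hd, hc1, hd1, hc2, hd2⟩, b, hb, ha2, hb2, _, _⟩ := hmem
  -- a.2 = 1/2, but a ∈ hatchY A forces a.2 ∈ [c.2, d.2] with c.1 = d.1 = a.1
  -- and c, d ∈ A with equal x-coordinates, hence c = d, so a.2 ∈ {0,1}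
  have hcd : c = d := by
    simp only [Set.mem_insert_iff, Set.mem_singleton_iff] at hc hd
    rcases hc with h1|h1|h1 <;> rcases hd with h2|h2|h2 <;>
      subst h1 <;> subst h2 <;> first | rfl | (exfalso; have hx := hc1.trans hd1.symm; norm_num at hx)
  subst hcd
  have : a.2 = c.2 := le_antisymm hd2 hc2
  rw [ha2] at this
  simp only [Set.mem_insert_iff, Set.mem_singleton_iff] at hc
  rcases hc with h1|h1|h1 <;> subst h1 <;> norm_num at this
end

section
/- Let A be a path connected subset of the Manhattan plane ℝ₁², p ∈ ℝ₁², and ε, δ ∈ {+,−}. Then A ∩ Q_p^{εδ} is nonempty if and only if L(A) ∩ Q_p^{εδ} is nonempty, where L(A) is the double hatching of A. -/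
open Set

/-- The real sign `+1` or `-1` associated to a Boolean sign. -/
def sgn (ε : Bool) : ℝ := if ε then 1 else -1

/-- The `ε₁ε₂`-quadrant of the point `p`:
`Q_p^{ε₁ε₂} = {q | ε₁(q₁ - p₁) ≥ 0 ∧ ε₂(q₂ - p₂) ≥ 0}`. -/
def quadrant (p : ℝ × ℝ) (ε₁ ε₂ : Bool) : Set (ℝ × ℝ) :=
  {q | 0 ≤ sgn ε₁ * (q.1 - p.1) ∧ 0 ≤ sgn ε₂ * (q.2 - p.2)}

/-- For a path connected `A`, a point `p` and signs `ε, δ`, the quadrant `Q_p^{εδ}` meets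
`A` if and only if it meets the double hatching `L(A)`. -/
theorem quadrant_inter_doubleHatch_nonempty_iff (A : Set (ℝ × ℝ))
    (hA : IsPathConnected A) (p : ℝ × ℝ) (ε δ : Bool) :
    (A ∩ quadrant p ε δ).Nonempty ↔ (doubleHatch A ∩ quadrant p ε δ).Nonempty := by
  constructor
  · rintro ⟨a, haA, hq⟩
    refine ⟨a, ⟨a, ⟨a, haA, a, haA, rfl, rfl, le_refl _, le_refl _⟩,
      a, ⟨a, haA, a, haA, rfl, rfl, le_refl _, le_refl _⟩,
      rfl, rfl, le_refl _, le_refl _⟩, hq⟩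
  · rintro ⟨q, ⟨a, ha, b, hb, ha2, hb2, ha1, hb1⟩, hq1, hq2⟩
    obtain ⟨r, hr, hr2, hrq⟩ : ∃ r ∈ hatchY A, r.2 = q.2 ∧ 0 ≤ sgn ε * (r.1 - p.1) := by
      cases ε
      · exact ⟨a, ha, ha2, by simp [sgn] at hq1 ⊢; linarith⟩
      · exact ⟨b, hb, hb2, by simp [sgn] at hq1 ⊢; linarith⟩
    obtain ⟨c, hc, d, hd, hc1, hd1, hc2, hd2⟩ := hr
    cases δ
    · refine ⟨c, hc, ?_, ?_⟩
      · rw [show c.1 = r.1 from hc1]; exact hrq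
      · simp only [sgn] at hq2 ⊢
        simp only [Bool.false_eq_true, if_false] at hq2 ⊢
        have : c.2 ≤ q.2 := hr2 ▸ hc2
        nlinarith
    · refine ⟨d, hd, ?_, ?_⟩
      · rw [show d.1 = r.1 from hd1]; exact hrq
      · simp only [sgn, if_true] at hq2 ⊢
        have : q.2 ≤ d.2 := hr2 ▸ hd2
        nlinarith
end

section
/- Let A be a path connected subset of the Manhattan plane ℝ₁² and p ∈ ℝ₁². If every one of the four quadrants of p has nonempty intersection with the double hatching L(A), then p belongs to L(A). -/
open Set

lemma mem_hatchY_self {A : Set (ℝ × ℝ)} {w : ℝ × ℝ} (hw : w ∈ A) : w ∈ hatchY A :=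
  ⟨w, hw, w, hw, rfl, rfl, le_refl _, le_refl _⟩

/-- Key IVT lemma: a continuous curve going from below `y = c` to above, starting left of
`x = b`, either hits the line `y = c` at a point with `x ≤ b`, or hits the line `x = b`
at a point with `y ≤ c`. -/
lemma key_ivt (f : ℝ → ℝ × ℝ) (hf : Continuous f) (b c : ℝ)
    (h0 : (f 0).2 ≤ c) (h1 : c ≤ (f 1).2) (hx : (f 0).1 ≤ b) :
    (∃ t ∈ Icc (0:ℝ) 1, (f t).2 = c ∧ (f t).1 ≤ b) ∨
    (∃ t ∈ Icc (0:ℝ) 1, (f t).1 = b ∧ (f t).2 ≤ c) := by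
  set S : Set ℝ := {t | t ∈ Icc (0:ℝ) 1 ∧ (f t).2 = c} with hS
  have hSne : S.Nonempty := by
    obtain ⟨t, ht, hft⟩ :=
      intermediate_value_Icc (by norm_num : (0:ℝ) ≤ 1)
        (hf.snd.continuousOn) ⟨h0, h1⟩
    exact ⟨t, ht, hft⟩
  have hSclosed : IsClosed S := by
    have : S = Icc (0:ℝ) 1 ∩ (fun t => (f t).2) ⁻¹' {c} := by
      ext t; exact Iff.rfl
    rw [this]
    exact isClosed_Icc.inter (isClosed_singleton.preimage hf.snd)
  have hbdd : BddBelow S := ⟨0, fun t ht => ht.1.1⟩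
  set t₀ := sInf S with ht₀
  have ht₀S : t₀ ∈ S := hSclosed.csInf_mem hSne hbdd
  have hmono : ∀ t ∈ Icc (0:ℝ) t₀, (f t).2 ≤ c := by
    intro t ht
    by_contra hlt
    push_neg at hlt
    obtain ⟨s, hs, hfs⟩ :=
      intermediate_value_Icc ht.1 (hf.snd.continuousOn) ⟨h0, hlt.le⟩
    have hs1 : s ∈ Icc (0:ℝ) 1 := ⟨hs.1, (hs.2.trans ht.2).trans ht₀S.1.2⟩
    have h1s : t₀ ≤ s := csInf_le hbdd ⟨hs1, hfs⟩
    have hst : s = t₀ := le_antisymm (hs.2.trans ht.2) h1s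
    have htt : t = t₀ := le_antisymm ht.2 (hst ▸ hs.2)
    rw [htt] at hlt
    have := ht₀S.2
    linarith
  by_cases hxb : (f t₀).1 ≤ b
  · exact Or.inl ⟨t₀, ht₀S.1, ht₀S.2, hxb⟩
  · push_neg at hxb
    obtain ⟨t₁, ht₁, hft₁⟩ :=
      intermediate_value_Icc ht₀S.1.1 (hf.fst.continuousOn) ⟨hx, hxb.le⟩
    exact Or.inr ⟨t₁, ⟨ht₁.1, ht₁.2.trans ht₀S.1.2⟩, hft₁, hmono t₁ ht₁⟩

/-- One-sided lemma: if `A` is path connected and contains points `u, v` with `x ≤ b`,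
`u` below `y = c` and `v` above, then either `A` meets the left half of the line `y = c`,
or `A` meets the line `x = b` both at height `≤ c` and at height `≥ c`. -/
lemma side_lemma {A : Set (ℝ × ℝ)} (hA : IsPathConnected A) {b c : ℝ} {u v : ℝ × ℝ}
    (hu : u ∈ A) (hv : v ∈ A) (hux : u.1 ≤ b) (hvx : v.1 ≤ b)
    (huy : u.2 ≤ c) (hvy : c ≤ v.2) :
    (∃ w ∈ A, w.2 = c ∧ w.1 ≤ b) ∨
    ((∃ w ∈ A, w.1 = b ∧ w.2 ≤ c) ∧ (∃ w ∈ A, w.1 = b ∧ c ≤ w.2)) := by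
  obtain ⟨γ, hγ⟩ := hA.joinedIn u hu v hv
  set f := γ.extend with hfdef
  have hfc : Continuous f := γ.continuous_extend
  have hmem : ∀ t, f t ∈ A := by
    intro t
    have hrange : f t ∈ range γ := by
      rw [← Path.extend_range]; exact mem_range_self t
    obtain ⟨s, hs⟩ := hrange
    rw [← hs]; exact hγ s
  have hf0 : f 0 = u := γ.extend_zero
  have hf1 : f 1 = v := γ.extend_one
  rcases key_ivt f hfc b c (by rw [hf0]; exact huy) (by rw [hf1]; exact hvy)
      (by rw [hf0]; exact hux) with ⟨t, _, h2, h1⟩ | ⟨t, _, h1, h2⟩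
  · exact Or.inl ⟨f t, hmem t, h2, h1⟩
  · -- look for an upper crossing via the reversed and y-flipped curve
    set g : ℝ → ℝ × ℝ := fun s => ((f (1 - s)).1, -(f (1 - s)).2) with hgdef
    have hrev : Continuous fun s : ℝ => f (1 - s) :=
      hfc.comp (continuous_const.sub continuous_id)
    have hgc : Continuous g := (hrev.fst).prodMk (hrev.snd.neg)
    have hg0 : g 0 = (v.1, -v.2) := by simp [hgdef, hf1]
    have hg1 : g 1 = (u.1, -u.2) := by simp [hgdef, hf0]
    rcases key_ivt g hgc b (-c) (by rw [hg0]; simpa using hvy)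
        (by rw [hg1]; simpa using huy) (by rw [hg0]; exact hvx)
      with ⟨s, _, k2, k1⟩ | ⟨s, _, k1, k2⟩
    · refine Or.inl ⟨f (1 - s), hmem _, ?_, ?_⟩
      · have : -(f (1 - s)).2 = -c := k2
        linarith
      · exact k1
    · refine Or.inr ⟨⟨f t, hmem t, h1, h2⟩, ⟨f (1 - s), hmem _, k1, ?_⟩⟩
      have : -(f (1 - s)).2 ≤ -c := k2
      linarith

lemma quad_to_A {A : Set (ℝ × ℝ)} {p q : ℝ × ℝ} (hq : q ∈ doubleHatch A) (ε₁ ε₂ : Bool)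
    (h1 : 0 ≤ sgn ε₁ * (q.1 - p.1)) (h2 : 0 ≤ sgn ε₂ * (q.2 - p.2)) :
    ∃ w ∈ A, 0 ≤ sgn ε₁ * (w.1 - p.1) ∧ 0 ≤ sgn ε₂ * (w.2 - p.2) := by
  obtain ⟨a, haY, b, hbY, ha2, hb2, ha1, hb1⟩ := hq
  obtain ⟨w, hwY, hw2, hw1⟩ : ∃ w ∈ hatchY A, w.2 = q.2 ∧ 0 ≤ sgn ε₁ * (w.1 - p.1) := by
    cases ε₁
    · refine ⟨a, haY, ha2, ?_⟩
      simp only [sgn, Bool.false_eq_true, if_false] at h1 ⊢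
      linarith
    · refine ⟨b, hbY, hb2, ?_⟩
      simp only [sgn, if_true] at h1 ⊢
      linarith
  obtain ⟨a', ha'A, b', hb'A, ha'1, hb'1, ha'2, hb'2⟩ := hwY
  cases ε₂
  · refine ⟨a', ha'A, by rw [ha'1]; exact hw1, ?_⟩
    simp only [sgn, Bool.false_eq_true, if_false] at h2 ⊢
    linarith
  · refine ⟨b', hb'A, by rw [hb'1]; exact hw1, ?_⟩
    simp only [sgn, if_true] at h2 ⊢
    linarith

/-- If `A` is path connected and every one of the four quadrants of `p` meets the double
hatching `L(A)`, then `p` belongs to `L(A)`. -/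
theorem mem_doubleHatch_of_quadrants_doubleHatch (A : Set (ℝ × ℝ))
    (hA : IsPathConnected A) (p : ℝ × ℝ)
    (h : ∀ ε₁ ε₂ : Bool, (doubleHatch A ∩ quadrant p ε₁ ε₂).Nonempty) :
    p ∈ doubleHatch A := by
  -- extract a point of A in each quadrant, with explicit inequalities
  have getA : ∀ ε₁ ε₂ : Bool, ∃ w ∈ A,
      0 ≤ sgn ε₁ * (w.1 - p.1) ∧ 0 ≤ sgn ε₂ * (w.2 - p.2) := by
    intro ε₁ ε₂
    obtain ⟨q, hqD, hq1, hq2⟩ := h ε₁ ε₂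
    exact quad_to_A hqD ε₁ ε₂ hq1 hq2
  obtain ⟨cmm, hmmA, hmm1, hmm2⟩ := getA false false
  obtain ⟨cmp, hmpA, hmp1, hmp2⟩ := getA false true
  obtain ⟨cpm, hpmA, hpm1, hpm2⟩ := getA true false
  obtain ⟨cpp, hppA, hpp1, hpp2⟩ := getA true true
  simp only [sgn, Bool.false_eq_true, if_false, if_true] at hmm1 hmm2 hmp1 hmp2 hpm1 hpm2 hpp1 hpp2
  have hmm1' : cmm.1 ≤ p.1 := by linarith
  have hmm2' : cmm.2 ≤ p.2 := by linarith
  have hmp1' : cmp.1 ≤ p.1 := by linarith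
  have hmp2' : p.2 ≤ cmp.2 := by linarith
  have hpm1' : p.1 ≤ cpm.1 := by linarith
  have hpm2' : cpm.2 ≤ p.2 := by linarith
  have hpp1' : p.1 ≤ cpp.1 := by linarith
  have hpp2' : p.2 ≤ cpp.2 := by linarith
  have hPY : p ∈ hatchY A → p ∈ doubleHatch A := fun hp =>
    ⟨p, hp, p, hp, rfl, rfl, le_refl _, le_refl _⟩
  -- left side
  rcases side_lemma hA hmmA hmpA hmm1' hmp1' hmm2' hmp2' with
    ⟨l, hlA, hl2, hl1⟩ | ⟨⟨w1, hw1A, hw1x, hw1y⟩, ⟨w2, hw2A, hw2x, hw2y⟩⟩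
  · -- right side, via reflection in x
    set B : Set (ℝ × ℝ) := (fun w : ℝ × ℝ => (-w.1, w.2)) '' A with hBdef
    have hB : IsPathConnected B :=
      hA.image ((continuous_fst.neg).prodMk continuous_snd)
    have hpmB : ((-cpm.1, cpm.2) : ℝ × ℝ) ∈ B := ⟨cpm, hpmA, rfl⟩
    have hppB : ((-cpp.1, cpp.2) : ℝ × ℝ) ∈ B := ⟨cpp, hppA, rfl⟩
    rcases side_lemma (b := -p.1) (c := p.2) hB hpmB hppB (by simpa using hpm1') (by simpa using hpp1')
        hpm2' hpp2' with
      ⟨r', hr'B, hr'2, hr'1⟩ | ⟨⟨v1', hv1B, hv1x, hv1y⟩, ⟨v2', hv2B, hv2x, hv2y⟩⟩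
    · obtain ⟨r, hrA, hr⟩ := hr'B
      have hr2 : r.2 = p.2 := by rw [← hr'2, ← hr]
      have hr1 : p.1 ≤ r.1 := by
        have : -r.1 ≤ -p.1 := by rw [← hr] at hr'1; exact hr'1
        linarith
      exact ⟨l, mem_hatchY_self hlA, r, mem_hatchY_self hrA, hl2, hr2, hl1, hr1⟩
    · obtain ⟨v1, hv1A, hv1⟩ := hv1B
      obtain ⟨v2, hv2A, hv2⟩ := hv2B
      refine hPY ⟨v1, hv1A, v2, hv2A, ?_, ?_, ?_, ?_⟩
      · have : -v1.1 = -p.1 := by rw [← hv1] at hv1x; exact hv1x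
        linarith
      · have : -v2.1 = -p.1 := by rw [← hv2] at hv2x; exact hv2x
        linarith
      · rw [← hv1] at hv1y; exact hv1y
      · rw [← hv2] at hv2y; exact hv2y
  · exact hPY ⟨w1, hw1A, w2, hw2A, hw1x, hw2x, hw1y, hw2y⟩
end

section
/- For every path connected subset A of the Manhattan plane ℝ₁², the double hatching L(A) is path connected. -/
open Set

lemma subset_hatchY (A : Set (ℝ × ℝ)) : A ⊆ hatchY A :=
  fun p hp => ⟨p, hp, p, hp, rfl, rfl, le_refl _, le_refl _⟩

lemma hatchY_subset_doubleHatch (A : Set (ℝ × ℝ)) : hatchY A ⊆ doubleHatch A :=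
  fun p hp => ⟨p, hp, p, hp, rfl, rfl, le_refl _, le_refl _⟩

lemma joinedIn_of_segment {s : Set (ℝ × ℝ)} {a p : ℝ × ℝ}
    (h : segment ℝ a p ⊆ s) : JoinedIn s a p :=
  ((convex_segment a p).isPathConnected ⟨a, left_mem_segment ℝ a p⟩).joinedIn
    a (left_mem_segment ℝ a p) p (right_mem_segment ℝ a p) |>.mono h

lemma horiz_joined {A : Set (ℝ × ℝ)} {p : ℝ × ℝ} (hp : p ∈ doubleHatch A) :
    ∃ a ∈ hatchY A, JoinedIn (doubleHatch A) a p := by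
  obtain ⟨a, ha, b, hb, ha2, hb2, ha1, hb1⟩ := hp
  refine ⟨a, ha, joinedIn_of_segment ?_⟩
  rintro x ⟨s, t, hs, ht, hst, rfl⟩
  have hs' : s = 1 - t := by linarith
  subst hs'
  refine ⟨a, ha, b, hb, ?_, ?_, ?_, ?_⟩ <;>
    simp only [Prod.fst_add, Prod.snd_add, Prod.smul_fst, Prod.smul_snd, smul_eq_mul]
  · linear_combination t * ha2
  · linear_combination hb2 + (t - 1) * ha2
  · nlinarith [mul_nonneg ht (sub_nonneg.2 ha1)]
  · nlinarith [mul_nonneg ht (sub_nonneg.2 hb1), mul_nonneg (sub_nonneg.2 (by linarith : t ≤ 1)) (sub_nonneg.2 (ha1.trans hb1))]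

lemma vert_joined {A : Set (ℝ × ℝ)} {a : ℝ × ℝ} (ha : a ∈ hatchY A) :
    ∃ c ∈ A, JoinedIn (doubleHatch A) c a := by
  obtain ⟨c, hc, d, hd, hc1, hd1, hc2, hd2⟩ := ha
  refine ⟨c, hc, joinedIn_of_segment ?_⟩
  rintro x ⟨s, t, hs, ht, hst, rfl⟩
  have hs' : s = 1 - t := by linarith
  subst hs'
  apply hatchY_subset_doubleHatch
  refine ⟨c, hc, d, hd, ?_, ?_, ?_, ?_⟩ <;>
    simp only [Prod.fst_add, Prod.snd_add, Prod.smul_fst, Prod.smul_snd, smul_eq_mul]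
  · linear_combination t * hc1
  · linear_combination hd1 + (t - 1) * hc1
  · nlinarith [mul_nonneg ht (sub_nonneg.2 hc2)]
  · nlinarith [mul_nonneg ht (sub_nonneg.2 hd2), mul_nonneg (sub_nonneg.2 (by linarith : t ≤ 1)) (sub_nonneg.2 (hc2.trans hd2))]

/-- For every path connected subset `A` of the Manhattan plane, the double hatching
`L(A)` is path connected. -/
theorem doubleHatch_isPathConnected (A : Set (ℝ × ℝ)) (hA : IsPathConnected A) :
    IsPathConnected (doubleHatch A) := by
  obtain ⟨x₀, hx₀, hjoin⟩ := hA
  have hAsub : A ⊆ doubleHatch A :=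
    (subset_hatchY A).trans (hatchY_subset_doubleHatch A)
  refine ⟨x₀, hAsub hx₀, ?_⟩
  intro p hp
  obtain ⟨a, haY, hap⟩ := horiz_joined hp
  obtain ⟨c, hcA, hca⟩ := vert_joined haY
  exact (((hjoin hcA).mono hAsub).trans hca).trans hap
end

section
/- Every hyperconvex metric space is strictly intrinsic: for any two points x and y there exists a geodesic from x to y, i.e. an isometric embedding γ of the interval [0, d(x,y)] (with the standard metric of ℝ) into X with γ(0) = x and γ(d(x,y)) = y. -/
/-- A metric space is hyperconvex if for every family of points and nonnegative radii
with `dist (x i) (x j) ≤ r i + r j`, the closed balls have a common point. -/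
def Hyperconvex (X : Type*) [MetricSpace X] : Prop :=
  ∀ (I : Type) (x : I → X) (r : I → ℝ),
    (∀ i, 0 ≤ r i) → (∀ i j, dist (x i) (x j) ≤ r i + r j) →
    (⋂ i, Metric.closedBall (x i) (r i)).Nonempty

/-- Every hyperconvex metric space is strictly intrinsic: any two points `x, y` are
joined by a geodesic, i.e. a map `γ` on `[0, dist x y]` with `γ 0 = x`,
`γ (dist x y) = y` and `dist (γ s) (γ t) = |s - t|`. -/
theorem exists_geodesic_of_hyperconvex (X : Type) [MetricSpace X]
    (h : Hyperconvex X) (x y : X) :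
    ∃ γ : ℝ → X, γ 0 = x ∧ γ (dist x y) = y ∧
      ∀ s ∈ Set.Icc (0 : ℝ) (dist x y), ∀ t ∈ Set.Icc (0 : ℝ) (dist x y),
        dist (γ s) (γ t) = |s - t| := by
  set d := dist x y with hd
  have hd0 : (0:ℝ) ≤ d := dist_nonneg
  -- partial geodesics as graphs
  set C : Set (Set (ℝ × X)) :=
    {P | ((0:ℝ), x) ∈ P ∧ (d, y) ∈ P ∧ ∀ a ∈ P, ∀ b ∈ P, dist a.2 b.2 ≤ |a.1 - b.1|}
    with hC
  have hbase : ({((0:ℝ), x), (d, y)} : Set (ℝ × X)) ∈ C := by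
    refine ⟨Or.inl rfl, Or.inr rfl, ?_⟩
    rintro a (rfl | rfl) b (rfl | rfl) <;>
      simp [abs_of_nonneg hd0, abs_sub_comm, dist_comm, ← hd]
  obtain ⟨M, -, hMC, hMmax⟩ :
      ∃ M, ({((0:ℝ), x), (d, y)} : Set (ℝ × X)) ⊆ M ∧ M ∈ C ∧
        ∀ P ∈ C, M ⊆ P → P ⊆ M := by
    have hchains : ∀ c ⊆ C, IsChain (· ⊆ ·) c → c.Nonempty →
        ∃ ub ∈ C, ∀ s ∈ c, s ⊆ ub := by
      rintro c hcC hchain ⟨P0, hP0⟩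
      refine ⟨⋃₀ c, ⟨?_, ?_, ?_⟩, fun s hs => Set.subset_sUnion_of_mem hs⟩
      · exact ⟨P0, hP0, (hcC hP0).1⟩
      · exact ⟨P0, hP0, (hcC hP0).2.1⟩
      · rintro a ⟨P, hP, haP⟩ b ⟨Q, hQ, hbQ⟩
        rcases hchain.total hP hQ with hPQ | hQP
        · exact (hcC hQ).2.2 a (hPQ haP) b hbQ
        · exact (hcC hP).2.2 a haP b (hQP hbQ)
    obtain ⟨M, hM1, hM2⟩ := zorn_subset_nonempty C hchains _ hbase
    exact ⟨M, hM1, hM2.1, fun P hP hMP => hM2.2 hP hMP⟩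
  obtain ⟨h0M, hdM, hlip⟩ := hMC
  -- maximality forces total domain
  have htot : ∀ t : ℝ, ∃ p, (t, p) ∈ M := by
    intro t
    by_contra ht
    push_neg at ht
    obtain ⟨p, hp⟩ := h M (fun a => a.1.2) (fun a => |t - a.1.1|)
      (fun a => abs_nonneg _)
      (fun a b => by
        calc dist a.1.2 b.1.2 ≤ |a.1.1 - b.1.1| := hlip a.1 a.2 b.1 b.2
          _ ≤ |a.1.1 - t| + |t - b.1.1| := abs_sub_le _ _ _
          _ = |t - a.1.1| + |t - b.1.1| := by rw [abs_sub_comm]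
        )
    simp only [Set.mem_iInter, Metric.mem_closedBall] at hp
    have hnew : insert (t, p) M ∈ C := by
      refine ⟨Or.inr h0M, Or.inr hdM, ?_⟩
      rintro a (rfl | haM) b (rfl | hbM)
      · simp
      · simpa [dist_comm, abs_sub_comm] using hp ⟨b, hbM⟩
      · simpa [dist_comm, abs_sub_comm t] using hp ⟨a, haM⟩
      · exact hlip a haM b hbM
    exact ht p (hMmax _ hnew (Set.subset_insert _ _) (Set.mem_insert _ _))
  choose γ hγ using htot
  have funl : ∀ t : ℝ, ∀ p, (t, p) ∈ M → γ t = p := by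
    intro t p hp
    have := hlip (t, γ t) (hγ t) (t, p) hp
    simpa [dist_eq_zero] using this
  refine ⟨γ, funl 0 x h0M, funl d y hdM, ?_⟩
  intro s hs t ht
  have hub : ∀ u v : ℝ, dist (γ u) (γ v) ≤ |u - v| :=
    fun u v => hlip (u, γ u) (hγ u) (v, γ v) (hγ v)
  have key : ∀ u v : ℝ, u ∈ Set.Icc (0:ℝ) d → v ∈ Set.Icc (0:ℝ) d → u ≤ v →
      v - u ≤ dist (γ u) (γ v) := by
    intro u v hu hv huv
    have h1 : dist x (γ u) ≤ u := by
      have := hub 0 u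
      rwa [funl 0 x h0M, abs_of_nonpos (by linarith [hu.1]), neg_sub, sub_zero] at this
    have h2 : dist (γ v) y ≤ d - v := by
      have := hub v d
      rwa [funl d y hdM, abs_of_nonpos (by linarith [hv.2]), neg_sub] at this
      -- |v - d| = d - v
    have h3 : d ≤ dist x (γ u) + dist (γ u) (γ v) + dist (γ v) y :=
      (dist_triangle4 x (γ u) (γ v) y)
    linarith
  rcases le_total s t with hst | hts
  · rw [abs_of_nonpos (by linarith), neg_sub]
    exact le_antisymm (by simpa [abs_of_nonpos (show s - t ≤ 0 by linarith), neg_sub] using hub s t)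
      (key s t hs ht hst)
  · rw [abs_of_nonneg (by linarith)]
    exact le_antisymm (by simpa [abs_of_nonneg (show 0 ≤ s - t by linarith)] using hub s t)
      (by simpa [dist_comm] using key t s ht hs hts)
end

section
/- Let A be a path connected subset of the Manhattan plane ℝ₁² and let B ⊆ ℝ₁² be a geodesically convex subset containing A. Then the double hatching L(A) is contained in B. -/
open Set

/-- `γ` is a geodesic from `x` to `y` in the Manhattan plane: a map defined on
`[0, d₁(x,y)]` with `γ 0 = x`, `γ (d₁(x,y)) = y`, and `d₁(γ s, γ t) = |s - t|`. -/
def IsTaxiGeodesic (x y : ℝ × ℝ) (γ : ℝ → ℝ × ℝ) : Prop :=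
  γ 0 = x ∧ γ (taxiDist x y) = y ∧
  ∀ s ∈ Set.Icc 0 (taxiDist x y), ∀ t ∈ Set.Icc 0 (taxiDist x y),
    taxiDist (γ s) (γ t) = |s - t|

/-- A subset `B` of the Manhattan plane is geodesically convex if any two of its points
are joined by a geodesic of ℝ₁² whose image lies in `B`. -/
def GeodesicallyConvex (B : Set (ℝ × ℝ)) : Prop :=
  ∀ x ∈ B, ∀ y ∈ B, ∃ γ : ℝ → ℝ × ℝ, IsTaxiGeodesic x y γ ∧
    ∀ t ∈ Set.Icc 0 (taxiDist x y), γ t ∈ B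

lemma horiz_mem (B : Set (ℝ × ℝ)) (hB : GeodesicallyConvex B)
    (x y : ℝ × ℝ) (hx : x ∈ B) (hy : y ∈ B) (hxy : x.2 = y.2)
    (c : ℝ) (h1 : x.1 ≤ c) (h2 : c ≤ y.1) : (c, x.2) ∈ B := by
  obtain ⟨γ, ⟨hγ0, hγD, hiso⟩, hmem⟩ := hB x hx y hy
  have hD : taxiDist x y = y.1 - x.1 := by
    simp [taxiDist, hxy, abs_of_nonpos (by linarith : x.1 - y.1 ≤ 0)]
  set t := c - x.1 with ht
  have htm : t ∈ Set.Icc 0 (taxiDist x y) := by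
    constructor <;> [linarith; (rw [hD]; linarith)]
  have h0m : (0 : ℝ) ∈ Set.Icc 0 (taxiDist x y) := ⟨le_refl _, by rw [hD]; linarith⟩
  have hDm : taxiDist x y ∈ Set.Icc 0 (taxiDist x y) := ⟨by rw [hD]; linarith, le_refl _⟩
  have e1 := hiso 0 h0m t htm
  have e2 := hiso t htm (taxiDist x y) hDm
  rw [hγ0] at e1
  rw [hγD] at e2
  have e1' : |x.1 - (γ t).1| + |x.2 - (γ t).2| = t := by
    rw [taxiDist] at e1; rw [e1]; rw [abs_of_nonpos (by linarith : (0:ℝ) - t ≤ 0)]; ring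
  have e2' : |(γ t).1 - y.1| + |(γ t).2 - y.2| = taxiDist x y - t := by
    rw [taxiDist] at e2; rw [e2, abs_of_nonpos (by rw [hD]; linarith : t - taxiDist x y ≤ 0)]; ring
  rw [hD] at e2'
  set u := (γ t).1
  set v := (γ t).2
  have a1 := le_abs_self (x.1 - u); have a2 := neg_abs_le (x.1 - u)
  have a3 := le_abs_self (u - y.1); have a4 := neg_abs_le (u - y.1)
  have a5 := abs_nonneg (x.2 - v); have a6 := abs_nonneg (v - y.2)
  have hveq : v = x.2 := by
    have : |x.2 - v| = 0 := by rw [hxy] at *; rw [abs_sub_comm v y.2] at e2'; linarith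
    have := abs_eq_zero.mp this; linarith
  have hueq : u = c := by
    have h5 : |x.2 - v| = 0 := by rw [hveq]; simp
    have h6 : |v - y.2| = 0 := by rw [hveq, hxy]; simp
    rw [h5] at e1'; rw [h6] at e2'
    linarith
  have : γ t = (c, x.2) := Prod.ext hueq hveq
  rw [← this]; exact hmem t htm

lemma vert_mem (B : Set (ℝ × ℝ)) (hB : GeodesicallyConvex B)
    (x y : ℝ × ℝ) (hx : x ∈ B) (hy : y ∈ B) (hxy : x.1 = y.1)
    (c : ℝ) (h1 : x.2 ≤ c) (h2 : c ≤ y.2) : (x.1, c) ∈ B := by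
  obtain ⟨γ, ⟨hγ0, hγD, hiso⟩, hmem⟩ := hB x hx y hy
  have hD : taxiDist x y = y.2 - x.2 := by
    simp [taxiDist, hxy, abs_of_nonpos (by linarith : x.2 - y.2 ≤ 0)]
  set t := c - x.2 with ht
  have htm : t ∈ Set.Icc 0 (taxiDist x y) := by
    constructor <;> [linarith; (rw [hD]; linarith)]
  have h0m : (0 : ℝ) ∈ Set.Icc 0 (taxiDist x y) := ⟨le_refl _, by rw [hD]; linarith⟩
  have hDm : taxiDist x y ∈ Set.Icc 0 (taxiDist x y) := ⟨by rw [hD]; linarith, le_refl _⟩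
  have e1 := hiso 0 h0m t htm
  have e2 := hiso t htm (taxiDist x y) hDm
  rw [hγ0] at e1
  rw [hγD] at e2
  have e1' : |x.1 - (γ t).1| + |x.2 - (γ t).2| = t := by
    rw [taxiDist] at e1; rw [e1]; rw [abs_of_nonpos (by linarith : (0:ℝ) - t ≤ 0)]; ring
  have e2' : |(γ t).1 - y.1| + |(γ t).2 - y.2| = taxiDist x y - t := by
    rw [taxiDist] at e2; rw [e2, abs_of_nonpos (by rw [hD]; linarith : t - taxiDist x y ≤ 0)]; ring
  rw [hD] at e2'
  set u := (γ t).1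
  set v := (γ t).2
  have a1 := le_abs_self (x.2 - v); have a2 := neg_abs_le (x.2 - v)
  have a3 := le_abs_self (v - y.2); have a4 := neg_abs_le (v - y.2)
  have a5 := abs_nonneg (x.1 - u); have a6 := abs_nonneg (u - y.1)
  have hueq : u = x.1 := by
    have : |x.1 - u| = 0 := by rw [hxy] at *; rw [abs_sub_comm u y.1] at e2'; linarith
    have := abs_eq_zero.mp this; linarith
  have hveq : v = c := by
    have h5 : |x.1 - u| = 0 := by rw [hueq]; simp
    have h6 : |u - y.1| = 0 := by rw [hueq, hxy]; simp
    rw [h5] at e1'; rw [h6] at e2'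
    linarith
  have : γ t = (x.1, c) := Prod.ext hueq hveq
  rw [← this]; exact hmem t htm

/-- If `A` is path connected and `B` is a geodesically convex subset of the Manhattan
plane containing `A`, then the double hatching `L(A)` is contained in `B`. -/
theorem doubleHatch_subset_of_geodesicallyConvex (A B : Set (ℝ × ℝ))
    (hA : IsPathConnected A) (hAB : A ⊆ B) (hB : GeodesicallyConvex B) :
    doubleHatch A ⊆ B := by
  intro p hp
  obtain ⟨q, hq, r, hr, hq2, hr2, hq1, hr1⟩ := hp
  obtain ⟨a, ha, a', ha', ha1, ha1', ha2, ha2'⟩ := hq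
  obtain ⟨b, hb, b', hb', hb1, hb1', hb2, hb2'⟩ := hr
  have hqB : (q.1, p.2) ∈ B := by
    have := vert_mem B hB a a' (hAB ha) (hAB ha') (by rw [ha1, ha1']) q.2 ha2 ha2'
    rwa [ha1, hq2] at this
  have hrB : (r.1, p.2) ∈ B := by
    have := vert_mem B hB b b' (hAB hb) (hAB hb') (by rw [hb1, hb1']) r.2 hb2 hb2'
    rwa [hb1, hr2] at this
  have := horiz_mem B hB (q.1, p.2) (r.1, p.2) hqB hrB rfl p.1 hq1 hr1
  simpa using this
end

section
/- Let A be a path connected subset of the Manhattan plane ℝ₁² and let B ⊆ ℝ₁² be a closed geodesically convex subset containing A. Then the topological closure of the double hatching L(A) is contained in B. -/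
open Set

/-- Horizontal segments between points of a geodesically convex set lie in it,
since the taxicab geodesic between horizontally aligned points is unique. -/
lemma seg_horiz (B : Set (ℝ × ℝ)) (hB : GeodesicallyConvex B)
    (a b : ℝ × ℝ) (ha : a ∈ B) (hb : b ∈ B) (hab : a.2 = b.2)
    (c : ℝ) (h1 : a.1 ≤ c) (h2 : c ≤ b.1) : ((c, a.2) : ℝ × ℝ) ∈ B := by
  obtain ⟨γ, ⟨hγ0, hγd, hγ⟩, hγB⟩ := hB a ha b hb
  have hd : taxiDist a b = b.1 - a.1 := by
    rw [taxiDist, hab, sub_self, abs_zero, add_zero, abs_sub_comm,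
      abs_of_nonneg (by linarith)]
  set d := taxiDist a b with hddef
  set t := c - a.1 with htdef
  have ht : t ∈ Set.Icc (0:ℝ) d := ⟨by linarith, by rw [hd]; linarith⟩
  have h0 : (0:ℝ) ∈ Set.Icc (0:ℝ) d := ⟨le_refl 0, by rw [hd]; linarith⟩
  have hD : d ∈ Set.Icc (0:ℝ) d := ⟨by rw [hd]; linarith, le_refl d⟩
  have hpa : taxiDist a (γ t) = t := by
    have := hγ 0 h0 t ht
    rw [hγ0] at this
    rw [this, zero_sub, abs_neg, abs_of_nonneg ht.1]
  have hpb : taxiDist (γ t) b = d - t := by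
    have := hγ t ht d hD
    rw [hγd] at this
    rw [this, abs_of_nonpos (by linarith [ht.2]), neg_sub]
  set p := γ t with hpdef
  have hgoal : p = ((c, a.2) : ℝ × ℝ) := by
    rw [taxiDist, abs_sub_comm a.1 p.1, abs_sub_comm a.2 p.2] at hpa
    rw [taxiDist, ← hab] at hpb
    have e1 := le_abs_self (p.1 - a.1)
    have e4 := neg_abs_le (p.1 - b.1)
    have hv : |p.2 - a.2| = 0 :=
      le_antisymm (by linarith [hd]) (abs_nonneg _)
    have hv' : p.2 = a.2 := by
      have := abs_eq_zero.mp hv; linarith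
    have hu : p.1 = c := by
      rw [hv] at hpa hpb
      linarith [hd]
    exact Prod.ext hu hv'
  rw [← hgoal]; exact hγB t ht

/-- Vertical segments between points of a geodesically convex set lie in it. -/
lemma seg_vert (B : Set (ℝ × ℝ)) (hB : GeodesicallyConvex B)
    (a b : ℝ × ℝ) (ha : a ∈ B) (hb : b ∈ B) (hab : a.1 = b.1)
    (c : ℝ) (h1 : a.2 ≤ c) (h2 : c ≤ b.2) : ((a.1, c) : ℝ × ℝ) ∈ B := by
  obtain ⟨γ, ⟨hγ0, hγd, hγ⟩, hγB⟩ := hB a ha b hb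
  have hd : taxiDist a b = b.2 - a.2 := by
    rw [taxiDist, hab, sub_self, abs_zero, zero_add, abs_sub_comm,
      abs_of_nonneg (by linarith)]
  set d := taxiDist a b with hddef
  set t := c - a.2 with htdef
  have ht : t ∈ Set.Icc (0:ℝ) d := ⟨by linarith, by rw [hd]; linarith⟩
  have h0 : (0:ℝ) ∈ Set.Icc (0:ℝ) d := ⟨le_refl 0, by rw [hd]; linarith⟩
  have hD : d ∈ Set.Icc (0:ℝ) d := ⟨by rw [hd]; linarith, le_refl d⟩
  have hpa : taxiDist a (γ t) = t := by
    have := hγ 0 h0 t ht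
    rw [hγ0] at this
    rw [this, zero_sub, abs_neg, abs_of_nonneg ht.1]
  have hpb : taxiDist (γ t) b = d - t := by
    have := hγ t ht d hD
    rw [hγd] at this
    rw [this, abs_of_nonpos (by linarith [ht.2]), neg_sub]
  set p := γ t with hpdef
  have hgoal : p = ((a.1, c) : ℝ × ℝ) := by
    rw [taxiDist, abs_sub_comm a.1 p.1, abs_sub_comm a.2 p.2] at hpa
    rw [taxiDist, ← hab] at hpb
    have e1 := le_abs_self (p.2 - a.2)
    have e4 := neg_abs_le (p.2 - b.2)
    have hv : |p.1 - a.1| = 0 :=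
      le_antisymm (by linarith [hd]) (abs_nonneg _)
    have hv' : p.1 = a.1 := by
      have := abs_eq_zero.mp hv; linarith
    have hu : p.2 = c := by
      rw [hv] at hpa hpb
      linarith [hd]
    exact Prod.ext hv' hu
  rw [← hgoal]; exact hγB t ht

/-- If `A` is path connected and `B` is a closed geodesically convex subset of the
Manhattan plane containing `A`, then the closure of `L(A)` is contained in `B`. -/
theorem closure_doubleHatch_subset_of_closed_geodesicallyConvex (A B : Set (ℝ × ℝ))
    (hA : IsPathConnected A) (hAB : A ⊆ B) (hBclosed : IsClosed B)
    (hB : GeodesicallyConvex B) :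
    closure (doubleHatch A) ⊆ B := by
  have hYB : hatchY A ⊆ B := by
    rintro q ⟨a, ha, b, hb, ha1, hb1, h1, h2⟩
    have := seg_vert B hB a b (hAB ha) (hAB hb) (ha1.trans hb1.symm) q.2 h1 h2
    rwa [ha1, Prod.mk.eta] at this
  have hsub : doubleHatch A ⊆ B := by
    rintro p ⟨a, ha, b, hb, ha2, hb2, h1, h2⟩
    have := seg_horiz B hB a b (hYB ha) (hYB hb) (ha2.trans hb2.symm) p.1 h1 h2
    rwa [ha2, Prod.mk.eta] at this
  exact closure_minimal hsub hBclosed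
end

section
/- Let A be a compact and path connected subset of the Manhattan plane ℝ₁². Then the double hatching L(A) is compact. -/
open Set

lemma hatchY_isCompact (A : Set (ℝ × ℝ)) (h : IsCompact A) : IsCompact (hatchY A) := by
  set f : (ℝ × ℝ) × (ℝ × ℝ) × ℝ → ℝ × ℝ :=
    fun x => (x.1.1, (1 - x.2.2) * x.1.2 + x.2.2 * x.2.1.2) with hf
  have hcont : Continuous f := by fun_prop
  set S : Set ((ℝ × ℝ) × (ℝ × ℝ) × ℝ) :=
    (A ×ˢ A ×ˢ Icc (0 : ℝ) 1) ∩ {x | x.1.1 = x.2.1.1 ∧ x.1.2 ≤ x.2.1.2} with hS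
  have hScomp : IsCompact S := by
    apply (h.prod (h.prod isCompact_Icc)).inter_right
    rw [setOf_and]
    exact (isClosed_eq continuous_fst.fst continuous_snd.fst.fst).inter
      (isClosed_le continuous_fst.snd continuous_snd.fst.snd)
  have himg : hatchY A = f '' S := by
    ext p
    constructor
    · rintro ⟨a, ha, b, hb, ha1, hb1, ha2, hb2⟩
      by_cases hcase : a.2 = b.2
      · refine ⟨(a, b, 0), ⟨⟨ha, hb, by norm_num⟩, by simpa using ha1.trans hb1.symm,
          by linarith⟩, ?_⟩
        have : p.2 = a.2 := le_antisymm (hcase ▸ hb2) ha2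
        simp [hf, ha1, this.symm, Prod.ext_iff]
      · have hd : (0:ℝ) < b.2 - a.2 := lt_of_le_of_ne (by linarith) (by intro h'; exact hcase (by linarith))
        refine ⟨(a, b, (p.2 - a.2) / (b.2 - a.2)), ⟨⟨ha, hb, ?_, ?_⟩,
          ha1.trans hb1.symm, by linarith⟩, ?_⟩
        · exact div_nonneg (by linarith) hd.le
        · rw [div_le_one hd]; linarith
        · simp only [hf, Prod.ext_iff]
          constructor
          · exact ha1
          · field_simp
            ring
    · rintro ⟨x, ⟨⟨hx1, hx2, ht0, ht1⟩, heq, hle⟩, rfl⟩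
      refine ⟨x.1, hx1, x.2.1, hx2, rfl, heq.symm, ?_, ?_⟩ <;> simp only [hf] <;> nlinarith
  rw [himg]
  exact hScomp.image hcont

lemma hatchX_eq_swap (A : Set (ℝ × ℝ)) :
    hatchX A = Prod.swap '' hatchY (Prod.swap '' A) := by
  ext p
  constructor
  · rintro ⟨a, ha, b, hb, ha2, hb2, ha1, hb1⟩
    exact ⟨p.swap, ⟨a.swap, ⟨a, ha, rfl⟩, b.swap, ⟨b, hb, rfl⟩, ha2, hb2, ha1, hb1⟩, rfl⟩
  · rintro ⟨q, ⟨a, ⟨a', ha', rfl⟩, b, ⟨b', hb', rfl⟩, ha1, hb1, ha2, hb2⟩, rfl⟩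
    exact ⟨a', ha', b', hb', ha1, hb1, ha2, hb2⟩

lemma hatchX_isCompact (A : Set (ℝ × ℝ)) (h : IsCompact A) : IsCompact (hatchX A) := by
  rw [hatchX_eq_swap]
  exact ((hatchY_isCompact _ (h.image continuous_swap)).image continuous_swap)

/-- For a compact and path connected subset `A` of the Manhattan plane, the double
hatching `L(A)` is compact. -/
theorem doubleHatch_isCompact (A : Set (ℝ × ℝ)) (hcomp : IsCompact A)
    (hA : IsPathConnected A) : IsCompact (doubleHatch A) := by
  exact hatchX_isCompact _ (hatchY_isCompact _ hcomp)
end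

section
/- Let p and q be two points of the Manhattan plane ℝ₁² lying on a common horizontal or vertical line (i.e. p₂ = q₂ or p₁ = q₁). Then any geodesic from p to q in ℝ₁² has image equal to the straight line segment joining p and q; in particular this segment is the unique geodesic between p and q up to reparametrization. -/
open Set

lemma taxi_aux (a b z t d : ℝ) (hd : d = |a - b|) (hdpos : 0 < d) (ht0 : 0 ≤ t)
    (h1 : |a - z| = t) (h2 : |z - b| = d - t) :
    z = (1 - t / d) * a + (t / d) * b := by
  rcases le_total a b with hab | hab
  · have hd' : d = b - a := by rw [hd, abs_of_nonpos (by linarith)]; ring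
    have hz : z = a + t := by
      rcases abs_cases (a - z) with ⟨e, _⟩ | ⟨e, _⟩ <;>
        rcases abs_cases (z - b) with ⟨f, _⟩ | ⟨f, _⟩ <;> linarith
    have hb : b = a + d := by linarith
    rw [hz, hb]; field_simp; ring
  · have hd' : d = a - b := by rw [hd, abs_of_nonneg (by linarith)]
    have hz : z = a - t := by
      rcases abs_cases (a - z) with ⟨e, _⟩ | ⟨e, _⟩ <;>
        rcases abs_cases (z - b) with ⟨f, _⟩ | ⟨f, _⟩ <;> linarith
    have hb : b = a - d := by linarith
    rw [hz, hb]; field_simp; ring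

/-- If `p` and `q` lie on a common horizontal or vertical line, then every geodesic from
`p` to `q` in the Manhattan plane has image the straight segment joining `p` and `q`;
in particular this segment is the unique geodesic up to reparametrization. -/
theorem geodesic_image_eq_segment (p q : ℝ × ℝ) (h : p.2 = q.2 ∨ p.1 = q.1)
    (γ : ℝ → ℝ × ℝ) (hγ : IsTaxiGeodesic p q γ) :
    γ '' Set.Icc 0 (taxiDist p q) = segment ℝ p q := by
  obtain ⟨hγ0, hγd, hγdist⟩ := hγ
  set d := taxiDist p q with hddef
  have hd0 : 0 ≤ d := add_nonneg (abs_nonneg _) (abs_nonneg _)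
  by_cases hd : d = 0
  · -- degenerate case p = q
    have hsum : |p.1 - q.1| + |p.2 - q.2| = 0 := hd
    have h1 : |p.1 - q.1| = 0 := by
      have := abs_nonneg (p.1 - q.1); have := abs_nonneg (p.2 - q.2); linarith
    have h2 : |p.2 - q.2| = 0 := by
      have := abs_nonneg (p.1 - q.1); linarith
    have hpq : p = q := by
      have := abs_eq_zero.mp h1; have := abs_eq_zero.mp h2
      exact Prod.ext (by linarith) (by linarith)
    rw [hd, Set.Icc_self, Set.image_singleton, hγ0, hpq, segment_same]
  · have hdpos : 0 < d := lt_of_le_of_ne hd0 (Ne.symm hd)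
    have key : ∀ t ∈ Set.Icc (0:ℝ) d, γ t = (1 - t / d) • p + (t / d) • q := by
      intro t ht
      obtain ⟨ht0, htd⟩ := ht
      have h1 := hγdist 0 ⟨le_refl 0, hd0⟩ t ⟨ht0, htd⟩
      have h2 := hγdist t ⟨ht0, htd⟩ d ⟨hd0, le_refl d⟩
      rw [hγ0] at h1; rw [hγd] at h2
      have h1' : |p.1 - (γ t).1| + |p.2 - (γ t).2| = t := by
        rw [show taxiDist p (γ t) = |p.1 - (γ t).1| + |p.2 - (γ t).2| from rfl] at h1
        rw [h1]; rw [abs_of_nonpos (by linarith)]; ring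
      have h2' : |(γ t).1 - q.1| + |(γ t).2 - q.2| = d - t := by
        rw [show taxiDist (γ t) q = |(γ t).1 - q.1| + |(γ t).2 - q.2| from rfl] at h2
        rw [h2, abs_of_nonpos (by linarith)]; ring
      rcases h with hcase | hcase
      · -- horizontal: p.2 = q.2
        have hdx : d = |p.1 - q.1| := by
          simp only [hddef, taxiDist, hcase, sub_self, abs_zero, add_zero]
        have tri := abs_sub_le p.1 (γ t).1 q.1
        have hz2a : |p.2 - (γ t).2| = 0 := by
          have e : (γ t).2 - q.2 = (γ t).2 - p.2 := by rw [hcase]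
          rw [e] at h2'
          have := abs_nonneg ((γ t).2 - p.2)
          have habs : |(γ t).2 - p.2| = |p.2 - (γ t).2| := abs_sub_comm _ _
          nlinarith [abs_nonneg (p.2 - (γ t).2)]
        have hz2 : (γ t).2 = p.2 := by
          have := abs_eq_zero.mp hz2a; linarith
        have hz2b : |(γ t).2 - q.2| = 0 := by
          rw [hz2, ← hcase, sub_self, abs_zero]
        have e1 : |p.1 - (γ t).1| = t := by rw [hz2a] at h1'; linarith
        have e2 : |(γ t).1 - q.1| = d - t := by rw [hz2b] at h2'; linarith
        have hx := taxi_aux p.1 q.1 (γ t).1 t d hdx hdpos ht0 e1 e2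
        have hy : (γ t).2 = (1 - t / d) * p.2 + (t / d) * q.2 := by
          rw [hz2, hcase]; ring
        exact Prod.ext hx hy
      · -- vertical: p.1 = q.1
        have hdx : d = |p.2 - q.2| := by
          simp only [hddef, taxiDist, hcase, sub_self, abs_zero, zero_add]
        have tri := abs_sub_le p.2 (γ t).2 q.2
        have hz1a : |p.1 - (γ t).1| = 0 := by
          have e : (γ t).1 - q.1 = (γ t).1 - p.1 := by rw [hcase]
          rw [e] at h2'
          have habs : |(γ t).1 - p.1| = |p.1 - (γ t).1| := abs_sub_comm _ _
          nlinarith [abs_nonneg (p.1 - (γ t).1)]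
        have hz1 : (γ t).1 = p.1 := by
          have := abs_eq_zero.mp hz1a; linarith
        have hz1b : |(γ t).1 - q.1| = 0 := by
          rw [hz1, ← hcase, sub_self, abs_zero]
        have e1 : |p.2 - (γ t).2| = t := by rw [hz1a] at h1'; linarith
        have e2 : |(γ t).2 - q.2| = d - t := by rw [hz1b] at h2'; linarith
        have hy := taxi_aux p.2 q.2 (γ t).2 t d hdx hdpos ht0 e1 e2
        have hx : (γ t).1 = (1 - t / d) * p.1 + (t / d) * q.1 := by
          rw [hz1, hcase]; ring
        exact Prod.ext hx hy
    ext z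
    constructor
    · rintro ⟨t, ht, rfl⟩
      rw [key t ht]
      exact ⟨1 - t / d, t / d, by
        have := ht.2; have := ht.1
        have : t / d ≤ 1 := by rw [div_le_one hdpos]; exact ht.2
        linarith, div_nonneg ht.1 hd0, by ring, rfl⟩
    · rintro ⟨a, b, ha, hb, hab, rfl⟩
      refine ⟨b * d, ⟨mul_nonneg hb hd0, by nlinarith⟩, ?_⟩
      rw [key (b * d) ⟨mul_nonneg hb hd0, by nlinarith⟩]
      have hbd : b * d / d = b := by field_simp
      rw [hbd]
      congr 1
      rw [show (1 : ℝ) - b = a from by linarith]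
end
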